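/- For every real number p ≥ 2 and all vectors ξ, η in ℝ^m, ⟨|ξ|^{p-2}ξ − |η|^{p-2}η, ξ − η⟩ ≥ 2^{-p/2} (|ξ|^2 + |η|^2)^{(p-2)/2} |ξ − η|^2. -/

import Mathlib

/-!
Write `A = |ξ|^{p-2}` and `B = |η|^{p-2}`. Polarization gives
`⟨Aξ - Bη, ξ - η⟩ = (A + B)/2 |ξ - η|^2 + (A - B)(|ξ|^2 - |η|^2)/2`, and the second term is
nonnegative because `t ↦ t^{p-2}` is monotone on `[0, ∞)`. For the first term,
`(|ξ|^2 + |η|^2)^{(p-2)/2} ≤ 2^{(p-2)/2} max(|ξ|, |η|)^{p-2} ≤ 2^{(p-2)/2} (A + B)`, and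
`2^{-p/2} 2^{(p-2)/2} = 1/2`.
-/

open Real

theorem real_inner_smul_sub_smul_sub {E : Type*} [NormedAddCommGroup E] [InnerProductSpace ℝ E]
    (a b : ℝ) (x y : E) :
    inner ℝ (a • x - b • y) (x - y) =
      (a + b) / 2 * ‖x - y‖ ^ 2 + (a - b) * (‖x‖ ^ 2 - ‖y‖ ^ 2) / 2 := by
  rw [norm_sub_sq_real]
  simp only [inner_sub_left, inner_sub_right, real_inner_smul_left,
    real_inner_self_eq_norm_sq, real_inner_comm x y]
  ring

theorem Real.rpow_sub_rpow_mul_sq_sub_sq_nonneg {a b q : ℝ} (ha : 0 ≤ a) (hb : 0 ≤ b)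
    (hq : 0 ≤ q) : 0 ≤ (a ^ q - b ^ q) * (a ^ 2 - b ^ 2) := by
  rcases le_total a b with hab | hba
  · exact mul_nonneg_of_nonpos_of_nonpos (sub_nonpos.2 (rpow_le_rpow ha hab hq))
      (sub_nonpos.2 (pow_le_pow_left₀ ha hab 2))
  · exact mul_nonneg (sub_nonneg.2 (rpow_le_rpow hb hba hq))
      (sub_nonneg.2 (pow_le_pow_left₀ hb hba 2))

theorem Real.sq_add_sq_rpow_half_le {a b q : ℝ} (ha : 0 ≤ a) (hb : 0 ≤ b) (hq : 0 ≤ q) :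
    (a ^ 2 + b ^ 2) ^ (q / 2) ≤ 2 ^ (q / 2) * (a ^ q + b ^ q) := by
  set M := max a b
  have hM : 0 ≤ M := ha.trans (le_max_left a b)
  have hsum : a ^ 2 + b ^ 2 ≤ 2 * M ^ 2 := by
    nlinarith [pow_le_pow_left₀ ha (le_max_left a b) 2, pow_le_pow_left₀ hb (le_max_right a b) 2]
  have hmax : M ^ q ≤ a ^ q + b ^ q := by
    rw [(monotoneOn_rpow_Ici_of_exponent_nonneg hq).map_max ha hb]
    exact max_le_add_of_nonneg (rpow_nonneg ha q) (rpow_nonneg hb q)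
  calc (a ^ 2 + b ^ 2) ^ (q / 2)
      ≤ (2 * M ^ 2) ^ (q / 2) := rpow_le_rpow (by positivity) hsum (by positivity)
    _ = 2 ^ (q / 2) * M ^ q := by
        rw [mul_rpow zero_le_two (by positivity), ← rpow_natCast, ← rpow_mul hM]
        norm_num [mul_div_cancel₀]
    _ ≤ 2 ^ (q / 2) * (a ^ q + b ^ q) := by gcongr

theorem stmt_1 (m : ℕ) (p : ℝ) (hp : 2 ≤ p)
    (ξ η : EuclideanSpace ℝ (Fin m)) :
    (inner ℝ ((‖ξ‖ ^ (p - 2)) • ξ - (‖η‖ ^ (p - 2)) • η) (ξ - η) : ℝ) ≥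
      (2 : ℝ) ^ (-p / 2) * (‖ξ‖ ^ 2 + ‖η‖ ^ 2) ^ ((p - 2) / 2) * ‖ξ - η‖ ^ 2 := by
  have hq : 0 ≤ p - 2 := by linarith
  set A := ‖ξ‖ ^ (p - 2)
  set B := ‖η‖ ^ (p - 2)
  have hcoef : (2 : ℝ) ^ (-p / 2) * (‖ξ‖ ^ 2 + ‖η‖ ^ 2) ^ ((p - 2) / 2) ≤ (A + B) / 2 :=
    calc (2 : ℝ) ^ (-p / 2) * (‖ξ‖ ^ 2 + ‖η‖ ^ 2) ^ ((p - 2) / 2)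
        ≤ 2 ^ (-p / 2) * (2 ^ ((p - 2) / 2) * (A + B)) := by
          gcongr; exact sq_add_sq_rpow_half_le (norm_nonneg ξ) (norm_nonneg η) hq
      _ = 2 ^ (-p / 2 + (p - 2) / 2) * (A + B) := by rw [rpow_add two_pos]; ring
      _ = (A + B) / 2 := by rw [show -p / 2 + (p - 2) / 2 = -1 by ring, rpow_neg_one]; ring
  have hmono : 0 ≤ (A - B) * (‖ξ‖ ^ 2 - ‖η‖ ^ 2) / 2 :=
    div_nonneg (rpow_sub_rpow_mul_sq_sub_sq_nonneg (norm_nonneg ξ) (norm_nonneg η) hq) two_pos.le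
  rw [ge_iff_le, real_inner_smul_sub_smul_sub]
  calc (2 : ℝ) ^ (-p / 2) * (‖ξ‖ ^ 2 + ‖η‖ ^ 2) ^ ((p - 2) / 2) * ‖ξ - η‖ ^ 2
      ≤ (A + B) / 2 * ‖ξ - η‖ ^ 2 := by gcongr
    _ ≤ _ := le_add_of_nonneg_right hmono
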